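/- Let D be a finite directed graph without self-loops, let v ∈ V(D), and let Q' be a quasi-kernel of the induced subgraph D − N⁺[v] obtained by deleting v and all of its out-neighbors. If no u ∈ Q' satisfies u ⟶ v, then Q' ∪ {v} is a quasi-kernel of D. -/

import Mathlib

/-- A finite directed graph without self-loops: a finite vertex set together with a
(decidable) arc relation whose arcs join vertices and which has no self-loops. -/
structure FinDigraph (α : Type) [DecidableEq α] where
  verts : Finset α
  adj : α → α → Bool
  adj_mem_left : ∀ u v, adj u v = true → u ∈ verts
  adj_mem_right : ∀ u v, adj u v = true → v ∈ verts
  no_loops : ∀ u, adj u u = false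

namespace FinDigraph

variable {α : Type} [DecidableEq α]

/-- The open out-neighborhood `N⁺(u)`. -/
def outNbhd (D : FinDigraph α) (u : α) : Finset α := D.verts.filter (fun v => D.adj u v)

/-- The closed out-neighborhood `N⁺[u] = N⁺(u) ∪ {u}`. -/
def closedNbhd (D : FinDigraph α) (u : α) : Finset α := insert u (D.outNbhd u)

/-- The out-degree `d⁺(u) = |N⁺(u)|`. -/
def outDeg (D : FinDigraph α) (u : α) : ℕ := (D.outNbhd u).card

/-- `D − S`: the subgraph induced by `V(D) − S`. -/
def del (D : FinDigraph α) (S : Finset α) : FinDigraph α where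
  verts := D.verts \ S
  adj := fun u v => D.adj u v && decide (u ∉ S) && decide (v ∉ S)
  adj_mem_left := by
    intro u v h
    simp only [Bool.and_eq_true, decide_eq_true_eq] at h
    exact Finset.mem_sdiff.2 ⟨D.adj_mem_left u v h.1.1, h.1.2⟩
  adj_mem_right := by
    intro u v h
    simp only [Bool.and_eq_true, decide_eq_true_eq] at h
    exact Finset.mem_sdiff.2 ⟨D.adj_mem_right u v h.1.1, h.2⟩
  no_loops := by intro u; simp [D.no_loops u]

/-- A source: a vertex with no ingoing arc. -/
def IsSource (D : FinDigraph α) (u : α) : Prop := u ∈ D.verts ∧ ∀ v, D.adj v u = false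

/-- The set of sources of `D`. -/
def sources (D : FinDigraph α) : Finset α :=
  D.verts.filter (fun u => ∀ v ∈ D.verts, D.adj v u = false)

/-- A quasi-kernel: an independent set `Q ⊆ V(D)` such that every vertex of `D`
is in `Q`, has an in-neighbor in `Q`, or is reachable in two steps from `Q`. -/
def IsQuasiKernel (D : FinDigraph α) (Q : Finset α) : Prop :=
  Q ⊆ D.verts ∧
  (∀ u ∈ Q, ∀ v ∈ Q, D.adj u v = false) ∧
  (∀ w ∈ D.verts, w ∈ Q ∨ (∃ v ∈ Q, D.adj v w = true) ∨
    (∃ u ∈ Q, ∃ v, D.adj u v = true ∧ D.adj v w = true))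

/-- Breakdown sequences (Definition 3 of the paper). -/
inductive IsBDS : FinDigraph α → List (α × Finset α) → Prop where
  | nil (D : FinDigraph α) : D.verts = ∅ → IsBDS D []
  | isolated (D : FinDigraph α) (u : α) (B : List (α × Finset α)) :
      (∀ x y, D.adj x y = false) → u ∈ D.verts →
      IsBDS (D.del {u}) B → IsBDS D ((u, (∅ : Finset α)) :: B)
  | step (D : FinDigraph α) (u : α) (B : List (α × Finset α)) :
      u ∈ D.verts → 0 < D.outDeg u →
      ((D.del (D.closedNbhd u)).sources \ D.sources).card ≤ D.outDeg u →
      IsBDS (D.del (D.closedNbhd u)) B → IsBDS D ((u, D.outNbhd u) :: B)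

/-- `F(B)`: the set of first components of the pairs in `B`. -/
def F (B : List (α × Finset α)) : Finset α := (B.map Prod.fst).toFinset

/-- A quasi-kernel `Q` is constructive with regard to `B` and `D`
(Definition 5 of the paper). -/
def IsConstructive (D : FinDigraph α) (B : List (α × Finset α)) (Q : Finset α) : Prop :=
  IsQuasiKernel D Q ∧
  ∀ p ∈ B, p.1 ∈ Q ∨ (∃ v ∈ Q, D.adj v p.1 = true) ∨
    (p.2 = ∅ ∧ ∃ u v M, ((u : α), (M : Finset α)) ∈ B ∧ v ∈ M ∧ D.adj v p.1 = true)

end FinDigraph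

namespace FinDigraph

variable {α : Type} [DecidableEq α] {D : FinDigraph α} {S Q : Finset α} {u v w : α}

@[simp]
theorem mem_del_verts : w ∈ (D.del S).verts ↔ w ∈ D.verts ∧ w ∉ S :=
  Finset.mem_sdiff

@[simp]
theorem del_adj_eq_true : (D.del S).adj u w = true ↔ D.adj u w = true ∧ u ∉ S ∧ w ∉ S := by
  simp [del, and_assoc]

theorem mem_closedNbhd : w ∈ D.closedNbhd v ↔ w = v ∨ D.adj v w = true := by
  simp only [closedNbhd, outNbhd, Finset.mem_insert, Finset.mem_filter]
  exact or_congr_right ⟨And.right, fun h => ⟨D.adj_mem_right v w h, h⟩⟩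

namespace IsQuasiKernel

theorem mem_verts_of_del (hQ : (D.del S).IsQuasiKernel Q) (hu : u ∈ Q) :
    u ∈ D.verts ∧ u ∉ S :=
  mem_del_verts.1 (hQ.1 hu)

theorem adj_eq_false_of_del (hQ : (D.del S).IsQuasiKernel Q) (hu : u ∈ Q) (hw : w ∈ Q) :
    D.adj u w = false := by
  refine Bool.eq_false_iff.2 fun huw => ?_
  have hdel : (D.del S).adj u w = true :=
    del_adj_eq_true.2 ⟨huw, (hQ.mem_verts_of_del hu).2, (hQ.mem_verts_of_del hw).2⟩
  rw [hQ.2.1 u hu w hw] at hdel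
  exact Bool.false_ne_true hdel

theorem absorbs_of_del (hQ : (D.del S).IsQuasiKernel Q) (hw : w ∈ D.verts) (hwS : w ∉ S) :
    w ∈ Q ∨ (∃ v ∈ Q, D.adj v w = true) ∨
      (∃ u ∈ Q, ∃ v, D.adj u v = true ∧ D.adj v w = true) := by
  rcases hQ.2.2 w (mem_del_verts.2 ⟨hw, hwS⟩) with hwQ | ⟨v, hv, hvw⟩ | ⟨u, hu, x, hux, hxw⟩
  · exact .inl hwQ
  · exact .inr (.inl ⟨v, hv, (del_adj_eq_true.1 hvw).1⟩)
  · exact .inr (.inr ⟨u, hu, x, (del_adj_eq_true.1 hux).1, (del_adj_eq_true.1 hxw).1⟩)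

theorem insert_of_del (hQ : (D.del S).IsQuasiKernel Q) (hv : v ∈ D.verts)
    (hS : S ⊆ D.closedNbhd v) (hvQ : ∀ u ∈ Q, D.adj v u = false)
    (hQv : ∀ u ∈ Q, D.adj u v = false) :
    D.IsQuasiKernel (insert v Q) := by
  refine ⟨Finset.insert_subset hv fun u hu => (hQ.mem_verts_of_del hu).1, ?_, ?_⟩
  · intro a ha b hb
    rcases Finset.mem_insert.1 ha with rfl | haQ <;> rcases Finset.mem_insert.1 hb with rfl | hbQ
    exacts [D.no_loops _, hvQ b hbQ, hQv a haQ, hQ.adj_eq_false_of_del haQ hbQ]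
  · intro w hw
    by_cases hwS : w ∈ S
    · rcases mem_closedNbhd.1 (hS hwS) with rfl | hvw
      · exact .inl (Finset.mem_insert_self w Q)
      · exact .inr (.inl ⟨v, Finset.mem_insert_self v Q, hvw⟩)
    · rcases hQ.absorbs_of_del hw hwS with hwQ | ⟨x, hx, hxw⟩ | ⟨x, hx, y, hxy, hyw⟩
      · exact .inl (Finset.mem_insert_of_mem hwQ)
      · exact .inr (.inl ⟨x, Finset.mem_insert_of_mem hx, hxw⟩)
      · exact .inr (.inr ⟨x, Finset.mem_insert_of_mem hx, y, hxy, hyw⟩)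

end IsQuasiKernel

end FinDigraph

/-- If `Q'` is a quasi-kernel of `D − N⁺[v]` and no `u ∈ Q'` satisfies
`u ⟶ v`, then `Q' ∪ {v}` is a quasi-kernel of `D`. -/
theorem quasiKernel_insert_of_del_closedNbhd {α : Type} [DecidableEq α]
    (D : FinDigraph α) (v : α) (hv : v ∈ D.verts) (Q' : Finset α)
    (hQ' : (D.del (D.closedNbhd v)).IsQuasiKernel Q')
    (h : ∀ u ∈ Q', D.adj u v = false) :
    D.IsQuasiKernel (insert v Q') := by
  have hvQ' : ∀ u ∈ Q', D.adj v u = false := fun u hu =>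
    Bool.eq_false_iff.2 fun hvu =>
      (hQ'.mem_verts_of_del hu).2 (FinDigraph.mem_closedNbhd.2 (.inr hvu))
  exact hQ'.insert_of_del hv subset_rfl hvQ' h
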